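/- arXiv:math-ph/9811008 — 2 statements merged into one kernel-verified Lean document; each statement's English description precedes it below -/
import Mathlib

section
/- For any pseudo-differential operator 𝓛 of order 1 and any i, the commutator [𝓛, (𝓛^i)₊] = -[𝓛, (𝓛^i)₋] has order at most -1 (it contains only negative powers of ∂), so the KP flows preserve the form 𝓛 = ∂ + w₁∂⁻¹ + w₂∂⁻² + ⋯. -/
/-- A pseudo-differential operator, represented by its coefficients:
`A n` is the coefficient function of `∂ⁿ`. -/
abbrev PsiDO := ℤ → ℝ → ℝ

/-- The generalized binomial coefficient `C(i,k) = i(i-1)⋯(i-k+1)/k!` for `i : ℤ`. -/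
noncomputable def pdChoose (i : ℤ) (k : ℕ) : ℝ :=
  (descPochhammer ℝ k).eval (i : ℝ) / (Nat.factorial k)

/-- Multiplication of pseudo-differential operators, determined by
`a ∂^i ∘ b ∂^j = Σ_{k≥0} C(i,k) a b^{(k)} ∂^{i+j-k}`. -/
noncomputable def pdMul (A B : PsiDO) : PsiDO := fun n x =>
  ∑ᶠ (i : ℤ), ∑ᶠ (k : ℕ), pdChoose i k * A i x * iteratedDeriv k (B (n - i + k)) x

/-- The projection `A₊` onto nonnegative powers of `∂`. -/
def pdPlus (A : PsiDO) : PsiDO := fun n => if 0 ≤ n then A n else 0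

/-- The projection `A₋ = A - A₊` onto negative powers of `∂`. -/
def pdMinus (A : PsiDO) : PsiDO := fun n => if n < 0 then A n else 0

/-- The commutator `[A,B] = AB - BA`. -/
noncomputable def pdComm (A B : PsiDO) : PsiDO := fun n x =>
  pdMul A B n x - pdMul B A n x

/-- Powers of a pseudo-differential operator. -/
noncomputable def pdPow (A : PsiDO) : ℕ → PsiDO
  | 0 => fun n _ => if n = 0 then 1 else 0
  | k + 1 => pdMul (pdPow A k) A


open Finset Polynomial

noncomputable def dch (x : ℝ) (k : ℕ) : ℝ :=
  (descPochhammer ℝ k).eval x / (Nat.factorial k)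


/-- order bound -/
def PBdd (A : PsiDO) (a : ℤ) : Prop := ∀ m : ℤ, a < m → A m = 0
/-- smooth coefficients -/
def PSm (A : PsiDO) : Prop := ∀ m : ℤ, ContDiff ℝ (⊤:ℕ∞) (A m)

lemma pdChoose_eq_dch (i : ℤ) (k : ℕ) : pdChoose i k = dch (i:ℝ) k := rfl

lemma itd_smooth {f : ℝ → ℝ} (h : ContDiff ℝ (⊤:ℕ∞) f) (k : ℕ) : ContDiff ℝ (⊤:ℕ∞) (iteratedDeriv k f) := by
  rw [iteratedDeriv_eq_iterate]; exact h.iterate_deriv k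

lemma itd_diff {f : ℝ → ℝ} (h : ContDiff ℝ (⊤:ℕ∞) f) (k : ℕ) (x : ℝ) :
    DifferentiableAt ℝ (iteratedDeriv k f) x :=
  ((itd_smooth h k).differentiable (by simp)) x

lemma itd_zero_fun (k : ℕ) (x : ℝ) : iteratedDeriv k (0 : ℝ → ℝ) x = 0 := by
  have : ∀ k, iteratedDeriv k (fun _ : ℝ => (0:ℝ)) = fun _ => 0 := by
    intro k
    induction k with
    | zero => simp [iteratedDeriv_zero]
    | succ n ih => rw [iteratedDeriv_succ', deriv_const']; exact ih
  exact congrFun (this k) x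

lemma itd_of_bdd {B : PsiDO} {b m : ℤ} (hB : PBdd B b) (h : b < m) (k : ℕ) (x : ℝ) :
    iteratedDeriv k (B m) x = 0 := by
  rw [hB m h]; exact itd_zero_fun k x

/-- Generalized expansion of `pdMul` as a finite double sum. -/
lemma pdMul_eq_sum {A B : PsiDO} {a b : ℤ} (hA : PBdd A a) (hB : PBdd B b)
    (n : ℤ) (x : ℝ) (s : Finset ℤ) (hs : ∀ i : ℤ, n - b ≤ i → i ≤ a → i ∈ s)
    (K : ℕ) (hK : a + b - n < (K:ℤ)) :
    pdMul A B n x = ∑ i ∈ s, ∑ k ∈ Finset.range K,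
      pdChoose i k * A i x * iteratedDeriv k (B (n - i + k)) x := by
  have hz : ∀ i : ℤ, ∀ k : ℕ, (a < i ∨ b < n - i + k) →
      pdChoose i k * A i x * iteratedDeriv k (B (n - i + k)) x = 0 := by
    intro i k h
    rcases h with h | h
    · rw [hA i h]; simp
    · rw [itd_of_bdd hB h, mul_zero]
  unfold pdMul
  rw [finsum_eq_finset_sum_of_support_subset _ (s := s) ?_]
  · refine Finset.sum_congr rfl fun i hi => ?_
    by_cases hia : a < i
    · rw [finsum_eq_zero_of_forall_eq_zero fun k => hz i k (Or.inl hia)]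
      exact (Finset.sum_eq_zero fun k _ => hz i k (Or.inl hia)).symm
    · push_neg at hia
      refine finsum_eq_finset_sum_of_support_subset _ fun k hk => ?_
      simp only [Function.mem_support] at hk
      simp only [Finset.coe_range, Set.mem_Iio]
      by_contra hkK
      push_neg at hkK
      exact hk (hz i k (Or.inr (by omega)))
  · intro i hi
    simp only [Function.mem_support] at hi
    simp only [Finset.mem_coe]
    by_contra his
    apply hi
    have : a < i ∨ i < n - b := by
      by_contra hcon
      push_neg at hcon
      exact his (hs i (by omega) (by omega))
    apply finsum_eq_zero_of_forall_eq_zero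
    intro k
    rcases this with h | h
    · exact hz i k (Or.inl h)
    · exact hz i k (Or.inr (by omega))

lemma pdMul_bdd {A B : PsiDO} {a b : ℤ} (hA : PBdd A a) (hB : PBdd B b) :
    PBdd (pdMul A B) (a + b) := by
  intro m hm
  funext x
  unfold pdMul
  rw [Pi.zero_apply]
  apply finsum_eq_zero_of_forall_eq_zero
  intro i
  apply finsum_eq_zero_of_forall_eq_zero
  intro k
  by_cases hia : a < i
  · rw [hA i hia]; simp
  · rw [itd_of_bdd hB (by omega), mul_zero]

lemma pdMul_smooth {A B : PsiDO} {a b : ℤ} (hA : PBdd A a) (hB : PBdd B b)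
    (hAs : PSm A) (hBs : PSm B) : PSm (pdMul A B) := by
  intro m
  have hrep : pdMul A B m = fun x => ∑ i ∈ Finset.Icc (m - b) a, ∑ k ∈ Finset.range ((a + b - m).toNat + 1),
      pdChoose i k * A i x * iteratedDeriv k (B (m - i + k)) x := by
    funext x
    exact pdMul_eq_sum hA hB m x _ (fun i h1 h2 => Finset.mem_Icc.mpr ⟨h1, h2⟩) _ (by omega)
  rw [hrep]
  apply ContDiff.sum
  intro i _
  apply ContDiff.sum
  intro k _
  exact (contDiff_const.mul (hAs i)).mul (itd_smooth (hBs _) k)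

lemma itd_const_mul {f : ℝ → ℝ} (h : ContDiff ℝ (⊤:ℕ∞) f) (c : ℝ) (k : ℕ) (x : ℝ) :
    iteratedDeriv k (fun z => c * f z) x = c * iteratedDeriv k f x := by
  simp only [← iteratedDerivWithin_univ]
  exact iteratedDerivWithin_const_mul (Set.mem_univ x) uniqueDiffOn_univ c
    ((h.of_le (by exact_mod_cast (le_top : (k:ℕ∞) ≤ ⊤)) : ContDiff ℝ k f).contDiffWithinAt)

lemma itd_sum {α : Type*} (s : Finset α) (f : α → ℝ → ℝ) (k : ℕ)
    (hf : ∀ i ∈ s, ContDiff ℝ (⊤:ℕ∞) (f i)) (x : ℝ) :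
    iteratedDeriv k (fun y => ∑ i ∈ s, f i y) x = ∑ i ∈ s, iteratedDeriv k (f i) x := by
  induction k generalizing x with
  | zero => simp
  | succ n ih =>
    rw [iteratedDeriv_succ]
    have hih : iteratedDeriv n (fun y => ∑ i ∈ s, f i y) = fun y => ∑ i ∈ s, iteratedDeriv n (f i) y :=
      funext fun y => ih y
    rw [hih, deriv_fun_sum fun i hi => itd_diff (hf i hi) n x]
    exact Finset.sum_congr rfl fun i hi => congrFun (iteratedDeriv_succ ..).symm x

lemma itd_itd (f : ℝ → ℝ) (m l : ℕ) :
    iteratedDeriv m (iteratedDeriv l f) = iteratedDeriv (m + l) f := by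
  induction m with
  | zero => simp
  | succ n ih => rw [iteratedDeriv_succ, ih, Nat.succ_add, iteratedDeriv_succ]

lemma itd_mul {f g : ℝ → ℝ} (hf : ContDiff ℝ (⊤:ℕ∞) f) (hg : ContDiff ℝ (⊤:ℕ∞) g) (k : ℕ) (x : ℝ) :
    iteratedDeriv k (fun y => f y * g y) x
      = ∑ p ∈ Finset.range (k+1), (k.choose p : ℝ) * iteratedDeriv p f x * iteratedDeriv (k-p) g x := by
  induction k generalizing x with
  | zero => simp
  | succ k ih =>
    have hrw : iteratedDeriv k (fun y => f y * g y)
        = fun y => ∑ p ∈ Finset.range (k+1), (k.choose p : ℝ) * iteratedDeriv p f y * iteratedDeriv (k-p) g y :=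
      funext fun y => ih y
    rw [iteratedDeriv_succ, hrw]
    have hdiff : ∀ p ∈ Finset.range (k+1), DifferentiableAt ℝ
        (fun y => (k.choose p : ℝ) * iteratedDeriv p f y * iteratedDeriv (k-p) g y) x :=
      fun p _ => ((itd_diff hf p x).const_mul _).mul (itd_diff hg (k-p) x)
    rw [deriv_fun_sum hdiff]
    have hterm : ∀ p ∈ Finset.range (k+1),
        deriv (fun y => (k.choose p : ℝ) * iteratedDeriv p f y * iteratedDeriv (k-p) g y) x
        = (k.choose p : ℝ) * iteratedDeriv (p+1) f x * iteratedDeriv (k-p) g x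
          + (k.choose p : ℝ) * iteratedDeriv p f x * iteratedDeriv ((k-p)+1) g x := by
      intro p _
      rw [deriv_fun_mul ((itd_diff hf p x).const_mul _) (itd_diff hg (k-p) x),
        deriv_const_mul _ (itd_diff hf p x)]
      rw [← iteratedDeriv_succ, ← iteratedDeriv_succ]
    rw [Finset.sum_congr rfl hterm, Finset.sum_add_distrib]
    -- S1 + S2 = target
    have hS2 : ∑ p ∈ Finset.range (k+1), (k.choose p : ℝ) * iteratedDeriv p f x * iteratedDeriv ((k-p)+1) g x
        = ∑ p ∈ Finset.range (k+1), (k.choose (p+1) : ℝ) * iteratedDeriv (p+1) f x * iteratedDeriv (k-p) g x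
          + iteratedDeriv 0 f x * iteratedDeriv (k+1) g x := by
      have hext : ∑ p ∈ Finset.range (k+1), (k.choose p : ℝ) * iteratedDeriv p f x * iteratedDeriv ((k-p)+1) g x
          = ∑ p ∈ Finset.range (k+2), (k.choose p : ℝ) * iteratedDeriv p f x * iteratedDeriv ((k+1)-p) g x := by
        rw [Finset.sum_range_succ (fun p => (k.choose p : ℝ) * iteratedDeriv p f x * iteratedDeriv ((k+1)-p) g x) (k+1)]
        rw [Nat.choose_succ_self, Nat.cast_zero, zero_mul, zero_mul, add_zero]
        refine Finset.sum_congr rfl fun p hp => ?_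
        have : (k - p) + 1 = (k+1) - p := by
          have := Finset.mem_range.mp hp; omega
        rw [this]
      rw [hext, Finset.sum_range_succ' (fun p => (k.choose p : ℝ) * iteratedDeriv p f x * iteratedDeriv ((k+1)-p) g x) (k+1)]
      simp only [Nat.choose_zero_right, Nat.cast_one, one_mul]
      refine congrArg₂ (· + ·) (Finset.sum_congr rfl fun p hp => ?_) rfl
      have : (k+1) - (p+1) = k - p := by omega
      rw [this]
    rw [hS2, ← add_assoc, ← Finset.sum_add_distrib]
    rw [Finset.sum_range_succ' (fun p => ((k+1).choose p : ℝ) * iteratedDeriv p f x * iteratedDeriv ((k+1)-p) g x) (k+1)]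
    simp only [Nat.choose_zero_right, Nat.cast_one, one_mul, Nat.sub_zero]
    refine congrArg₂ (· + ·) (Finset.sum_congr rfl fun p hp => ?_) rfl
    rw [Nat.choose_succ_succ, Nat.cast_add]
    have : (k+1) - (p+1) = k - p := by omega
    rw [this]
    ring
lemma dch_zero (x : ℝ) : dch x 0 = 1 := by simp [dch]

lemma dch_succ (x : ℝ) (k : ℕ) : dch x (k+1) * (k+1) = dch x k * (x - k) := by
  have h := descPochhammer_succ_eval (S := ℝ) k x
  have hk : (Nat.factorial (k+1) : ℝ) ≠ 0 := by exact_mod_cast (Nat.factorial_pos (k+1)).ne'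
  have hk' : (Nat.factorial k : ℝ) ≠ 0 := by exact_mod_cast (Nat.factorial_pos k).ne'
  rw [dch, dch, h, Nat.factorial_succ]
  push_cast
  field_simp

lemma dch_nat_zero (k : ℕ) (hk : k ≠ 0) : dch 0 k = 0 := by
  obtain ⟨m, rfl⟩ := Nat.exists_eq_succ_of_ne_zero hk
  have := descPochhammer_succ_left (R := ℝ) m
  rw [dch, this]
  simp

lemma dch_split (x : ℝ) (r q : ℕ) :
    dch x (r+q) * ((r+q).choose r : ℝ) = dch x r * dch (x - r) q := by
  have key : (descPochhammer ℝ (r+q)).eval x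
      = (descPochhammer ℝ r).eval x * (descPochhammer ℝ q).eval (x - r) := by
    rw [← descPochhammer_mul]
    simp [eval_comp]
  have hfact : ((r+q).choose r : ℝ) * (Nat.factorial r) * (Nat.factorial q) = Nat.factorial (r+q) := by
    rw [Nat.choose_symm_add]
    exact_mod_cast congrArg Nat.cast (Nat.add_choose_mul_factorial_mul_factorial r q)
  have h1 : (Nat.factorial (r+q) : ℝ) ≠ 0 := by exact_mod_cast (Nat.factorial_pos _).ne'
  have h2 : (Nat.factorial r : ℝ) ≠ 0 := by exact_mod_cast (Nat.factorial_pos _).ne'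
  have h3 : (Nat.factorial q : ℝ) ≠ 0 := by exact_mod_cast (Nat.factorial_pos _).ne'
  rw [dch, dch, dch, key]
  field_simp
  linear_combination (Polynomial.eval x (descPochhammer ℝ r) * Polynomial.eval (x - ↑r) (descPochhammer ℝ q)) * hfact

lemma dch_vandermonde (x y : ℝ) (s : ℕ) :
    ∑ p ∈ range (s+1), dch x p * dch y (s - p) = dch (x + y) s := by
  induction s with
  | zero => simp [dch_zero]
  | succ s ih =>
    have hs1 : ((s:ℝ)+1) ≠ 0 := by positivity
    -- multiply both sides by (s+1)
    have key : (∑ p ∈ range (s+2), dch x p * dch y (s+1-p)) * ((s:ℝ)+1)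
        = dch (x+y) (s+1) * ((s:ℝ)+1) := by
      have RHS : dch (x+y) (s+1) * ((s:ℝ)+1) = dch (x+y) s * (x + y - s) := by
        have := dch_succ (x+y) s; push_cast at this ⊢; linarith [this]
      have RHS2 : dch (x+y) (s+1) * ((s:ℝ)+1)
          = ∑ p ∈ range (s+1), dch x p * dch y (s-p) * (x + y - (s:ℝ)) := by
        rw [RHS, ← ih, Finset.sum_mul]
      rw [RHS2, Finset.sum_mul]
      -- LHS: split (s+1) = p + (s+1-p)
      have hsplit : ∀ p ∈ range (s+2), dch x p * dch y (s+1-p) * ((s:ℝ)+1)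
          = (p:ℝ) * (dch x p * dch y (s+1-p)) + ((s+1-p : ℕ):ℝ) * (dch x p * dch y (s+1-p)) := by
        intro p hp
        have hple : p ≤ s + 1 := Nat.lt_succ_iff.mp (mem_range.mp hp)
        have : ((s+1-p : ℕ):ℝ) = (s:ℝ) + 1 - p := by
          push_cast [Nat.cast_sub hple]; ring
        rw [this]; ring
      rw [Finset.sum_congr rfl hsplit, Finset.sum_add_distrib]
      have hA : ∑ p ∈ range (s+2), (p:ℝ) * (dch x p * dch y (s+1-p))
          = ∑ p ∈ range (s+1), (x - p) * (dch x p * dch y (s-p)) := by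
        rw [Finset.sum_range_succ' (fun p => (p:ℝ) * (dch x p * dch y (s+1-p))) (s+1)]
        simp only [Nat.cast_zero, zero_mul, add_zero]
        refine Finset.sum_congr rfl fun p hp => ?_
        have h1 : s + 1 - (p+1) = s - p := by omega
        have h2 : dch x (p+1) * ((p:ℝ)+1) = dch x p * (x - p) := dch_succ x p
        rw [h1]
        push_cast
        linear_combination dch y (s - p) * h2
      have hB : ∑ p ∈ range (s+2), ((s+1-p : ℕ):ℝ) * (dch x p * dch y (s+1-p))
          = ∑ p ∈ range (s+1), (y - (s-p:ℕ)) * (dch x p * dch y (s-p)) := by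
        rw [Finset.sum_range_succ (fun p => ((s+1-p : ℕ):ℝ) * (dch x p * dch y (s+1-p))) (s+1)]
        simp only [Nat.sub_self, Nat.cast_zero, zero_mul, add_zero]
        refine Finset.sum_congr rfl fun p hp => ?_
        have hple : p ≤ s := Nat.lt_succ_iff.mp (mem_range.mp hp)
        have h1 : s + 1 - p = (s - p) + 1 := by omega
        have h2 : dch y ((s-p)+1) * (((s-p:ℕ):ℝ)+1) = dch y (s-p) * (y - (s-p:ℕ)) := dch_succ y (s-p)
        rw [h1]
        push_cast
        linear_combination dch x p * h2
      rw [hA, hB, ← Finset.sum_add_distrib]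
      refine Finset.sum_congr rfl fun p hp => ?_
      have hple : p ≤ s := Nat.lt_succ_iff.mp (mem_range.mp hp)
      have hc : ((s - p : ℕ) : ℝ) = (s:ℝ) - p := by push_cast [Nat.cast_sub hple]; ring
      rw [hc]; ring
    exact mul_right_cancel₀ hs1 key

lemma pdChoose_zero (i : ℤ) : pdChoose i 0 = 1 := by
  rw [pdChoose_eq_dch]; exact dch_zero _

lemma pdChoose_mul_choose (i : ℤ) (p t : ℕ) :
    pdChoose i (p+t) * ((p+t).choose p : ℝ) = pdChoose i p * dch ((i:ℝ) - p) t := by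
  rw [pdChoose_eq_dch, pdChoose_eq_dch]; exact dch_split (i:ℝ) p t

/-- shifting an integer summation variable, via `finsum` -/
lemma sum_shift (h : ℤ → ℝ) (d : ℤ) (s t : Finset ℤ)
    (hs : ∀ u, h u ≠ 0 → u ∈ s) (ht : ∀ u, h u ≠ 0 → u - d ∈ t) :
    ∑ u ∈ s, h u = ∑ j ∈ t, h (j + d) := by
  have h1 : ∑ᶠ u, h u = ∑ u ∈ s, h u :=
    finsum_eq_finset_sum_of_support_subset h fun u hu => hs u hu
  have h2 : ∑ᶠ j, h (j + d) = ∑ j ∈ t, h (j + d) := by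
    refine finsum_eq_finset_sum_of_support_subset _ fun j hj => ?_
    have := ht (j + d) hj
    simpa using this
  have h3 : ∑ᶠ j, h (j + d) = ∑ᶠ u, h u := finsum_comp_equiv (Equiv.addRight d) (f := h)
  rw [← h1, ← h3, h2]

/-- rectangle sum to diagonal sums -/
lemma sum_diag (g : ℕ → ℕ → ℝ) (S : ℕ) (hg : ∀ t l, g t l ≠ 0 → t < S ∧ l < S) :
    ∑ t ∈ Finset.range S, ∑ l ∈ Finset.range S, g t l
      = ∑ s ∈ Finset.range (2*S), ∑ t ∈ Finset.range (s+1), g t (s - t) := by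
  rw [← Finset.sum_product', Finset.sum_sigma']
  rw [← Finset.sum_filter_of_ne (s := (Finset.range (2*S)).sigma fun s => Finset.range (s+1))
    (p := fun q => q.2 < S ∧ q.1 - q.2 < S) (f := fun q => g q.2 (q.1 - q.2)) ?hne]
  case hne =>
    intro q _ hq
    exact hg q.2 (q.1 - q.2) hq
  refine Finset.sum_nbij' (i := fun p : ℕ × ℕ => (⟨p.1 + p.2, p.1⟩ : Σ _ : ℕ, ℕ))
    (j := fun q : Σ _ : ℕ, ℕ => (q.2, q.1 - q.2)) ?_ ?_ ?_ ?_ ?_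
  · rintro ⟨t, l⟩ hp
    simp only [Finset.mem_product, Finset.mem_range] at hp
    simp only [Finset.mem_filter, Finset.mem_sigma, Finset.mem_range]
    omega
  · rintro ⟨s', t⟩ hq
    simp only [Finset.mem_filter, Finset.mem_sigma, Finset.mem_range] at hq
    simp only [Finset.mem_product, Finset.mem_range]
    omega
  · rintro ⟨t, l⟩ _
    simp
  · rintro ⟨s', t⟩ hq
    simp only [Finset.mem_filter, Finset.mem_sigma, Finset.mem_range] at hq
    simp only [Sigma.mk.inj_iff, heq_eq_eq]
    constructor
    · omega
    · trivial
  · rintro ⟨t, l⟩ _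
    simp

noncomputable def assocF (A B C : PsiDO) (n : ℤ) (x : ℝ) (i j : ℤ) (r s : ℕ) : ℝ :=
  pdChoose i r * pdChoose (i + j - r) s * A i x * iteratedDeriv r (B j) x
    * iteratedDeriv s (C (n - i - j + r + s)) x

lemma assocF_bounds {A B C : PsiDO} {a b c : ℤ} (hA : PBdd A a) (hB : PBdd B b) (hC : PBdd C c)
    (n : ℤ) (x : ℝ) (i j : ℤ) (r s : ℕ) (h : assocF A B C n x i j r s ≠ 0) :
    i ≤ a ∧ j ≤ b ∧ n - i - j + r + s ≤ c := by
  refine ⟨?_, ?_, ?_⟩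
  · by_contra h1; push_neg at h1
    exact h (by unfold assocF; rw [hA i h1]; simp)
  · by_contra h1; push_neg at h1
    exact h (by unfold assocF; rw [itd_of_bdd hB h1]; ring)
  · by_contra h1; push_neg at h1
    exact h (by unfold assocF; rw [itd_of_bdd hC h1]; ring)

lemma sum_box_eq_finsum {s₁ s₂ : Finset ℤ} {K₁ K₂ : ℕ} (F : ℤ → ℤ → ℕ → ℕ → ℝ)
    (h : ∀ i j r s, F i j r s ≠ 0 → i ∈ s₁ ∧ j ∈ s₂ ∧ r ∈ Finset.range K₁ ∧ s ∈ Finset.range K₂) :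
    ∑ i ∈ s₁, ∑ j ∈ s₂, ∑ r ∈ Finset.range K₁, ∑ s ∈ Finset.range K₂, F i j r s
      = ∑ᶠ i, ∑ᶠ j, ∑ᶠ r, ∑ᶠ s, F i j r s := by
  symm
  rw [finsum_eq_finset_sum_of_support_subset _ (s := s₁) ?_]
  · refine Finset.sum_congr rfl fun i _ => ?_
    rw [finsum_eq_finset_sum_of_support_subset _ (s := s₂) ?_]
    · refine Finset.sum_congr rfl fun j _ => ?_
      rw [finsum_eq_finset_sum_of_support_subset _ (s := Finset.range K₁) ?_]
      · refine Finset.sum_congr rfl fun r _ => ?_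
        rw [finsum_eq_finset_sum_of_support_subset _ (s := Finset.range K₂) ?_]
        intro s hs
        simp only [Function.mem_support] at hs
        exact (h i j r s hs).2.2.2
      · intro r hr
        simp only [Function.mem_support] at hr
        by_contra hrs
        apply hr
        apply finsum_eq_zero_of_forall_eq_zero
        intro s
        by_contra hF
        exact hrs (h i j r s hF).2.2.1
    · intro j hj
      simp only [Function.mem_support] at hj
      by_contra hjs
      apply hj
      apply finsum_eq_zero_of_forall_eq_zero; intro r
      apply finsum_eq_zero_of_forall_eq_zero; intro s
      by_contra hF
      exact hjs (h i j r s hF).2.1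
  · intro i hi
    simp only [Function.mem_support] at hi
    by_contra his
    apply hi
    apply finsum_eq_zero_of_forall_eq_zero; intro j
    apply finsum_eq_zero_of_forall_eq_zero; intro r
    apply finsum_eq_zero_of_forall_eq_zero; intro s
    by_contra hF
    exact his (h i j r s hF).1

lemma assoc_lhs {A B C : PsiDO} {a b c : ℤ} (hA : PBdd A a) (hB : PBdd B b) (hC : PBdd C c)
    (n : ℤ) (x : ℝ) :
    pdMul (pdMul A B) C n x = ∑ᶠ i, ∑ᶠ j, ∑ᶠ r, ∑ᶠ s, assocF A B C n x i j r s := by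
  set K₁ : ℕ := (a+b+c-n).toNat + 1 with hK₁
  set s₁ : Finset ℤ := Finset.Icc (n - c) (a + b) with hs₁
  set s₂ : Finset ℤ := Finset.Icc (n - c - b) a with hs₂
  set s₃ : Finset ℤ := Finset.Icc (n - a - c) b with hs₃
  have hK₁' : (a+b+c-n : ℤ) < (K₁ : ℤ) := by simp [hK₁]
  -- T: fully distributed summand
  set T : ℤ → ℕ → ℤ → ℕ → ℝ := fun u s i r =>
    pdChoose u s * (pdChoose i r * A i x * iteratedDeriv r (B (u - i + r)) x)
      * iteratedDeriv s (C (n - u + s)) x with hT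
  have hTbd : ∀ u s i r, T u s i r ≠ 0 → (u - i + (r:ℤ) ≤ b ∧ n - u + (s:ℤ) ≤ c) := by
    intro u s i r h
    constructor
    · by_contra h1; push_neg at h1
      exact h (by rw [hT]; simp only; rw [itd_of_bdd hB h1]; ring)
    · by_contra h1; push_neg at h1
      exact h (by rw [hT]; simp only; rw [itd_of_bdd hC h1]; ring)
  have h1 : pdMul (pdMul A B) C n x = ∑ u ∈ s₁, ∑ s ∈ Finset.range K₁, ∑ i ∈ s₂, ∑ r ∈ Finset.range K₁, T u s i r := by
    rw [pdMul_eq_sum (pdMul_bdd hA hB) hC n x s₁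
      (fun u hu1 hu2 => Finset.mem_Icc.mpr ⟨hu1, hu2⟩) K₁ (by omega)]
    refine Finset.sum_congr rfl fun u hu => Finset.sum_congr rfl fun s _ => ?_
    have hu' := Finset.mem_Icc.mp hu
    rw [pdMul_eq_sum hA hB u x s₂
      (fun i hi1 hi2 => Finset.mem_Icc.mpr ⟨by omega, hi2⟩) K₁ (by omega)]
    rw [Finset.mul_sum, Finset.sum_mul]
    refine Finset.sum_congr rfl fun i _ => ?_
    rw [Finset.mul_sum, Finset.sum_mul]
  -- reorder (u,s,i,r) -> (i,r,u,s)
  have h2 : ∑ u ∈ s₁, ∑ s ∈ Finset.range K₁, ∑ i ∈ s₂, ∑ r ∈ Finset.range K₁, T u s i r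
      = ∑ i ∈ s₂, ∑ r ∈ Finset.range K₁, ∑ u ∈ s₁, ∑ s ∈ Finset.range K₁, T u s i r := by
    rw [show (∑ u ∈ s₁, ∑ s ∈ Finset.range K₁, ∑ i ∈ s₂, ∑ r ∈ Finset.range K₁, T u s i r)
        = ∑ u ∈ s₁, ∑ i ∈ s₂, ∑ s ∈ Finset.range K₁, ∑ r ∈ Finset.range K₁, T u s i r from
      Finset.sum_congr rfl fun u _ => Finset.sum_comm]
    rw [Finset.sum_comm]
    refine Finset.sum_congr rfl fun i _ => ?_
    rw [show (∑ u ∈ s₁, ∑ s ∈ Finset.range K₁, ∑ r ∈ Finset.range K₁, T u s i r)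
        = ∑ u ∈ s₁, ∑ r ∈ Finset.range K₁, ∑ s ∈ Finset.range K₁, T u s i r from
      Finset.sum_congr rfl fun u _ => Finset.sum_comm]
    exact Finset.sum_comm
  -- shift u = j + (i - r)
  have h3 : ∑ i ∈ s₂, ∑ r ∈ Finset.range K₁, ∑ u ∈ s₁, ∑ s ∈ Finset.range K₁, T u s i r
      = ∑ i ∈ s₂, ∑ r ∈ Finset.range K₁, ∑ j ∈ s₃, ∑ s ∈ Finset.range K₁, T (j + (i - r)) s i r := by
    refine Finset.sum_congr rfl fun i hi => Finset.sum_congr rfl fun r _ => ?_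
    have hi' := Finset.mem_Icc.mp hi
    refine sum_shift (fun u => ∑ s ∈ Finset.range K₁, T u s i r) (i - r) s₁ s₃ ?_ ?_
    · intro u hu
      obtain ⟨s, _, hTs⟩ := Finset.exists_ne_zero_of_sum_ne_zero hu
      have := hTbd u s i r hTs
      rw [hs₁, Finset.mem_Icc]
      omega
    · intro u hu
      obtain ⟨s, _, hTs⟩ := Finset.exists_ne_zero_of_sum_ne_zero hu
      have := hTbd u s i r hTs
      rw [hs₃, Finset.mem_Icc]
      omega
  -- rewrite leaf to assocF, swap r and j
  have h4 : ∑ i ∈ s₂, ∑ r ∈ Finset.range K₁, ∑ j ∈ s₃, ∑ s ∈ Finset.range K₁, T (j + (i - r)) s i r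
      = ∑ i ∈ s₂, ∑ j ∈ s₃, ∑ r ∈ Finset.range K₁, ∑ s ∈ Finset.range K₁, assocF A B C n x i j r s := by
    refine Finset.sum_congr rfl fun i _ => ?_
    rw [Finset.sum_comm]
    refine Finset.sum_congr rfl fun j _ => Finset.sum_congr rfl fun r _ =>
      Finset.sum_congr rfl fun s _ => ?_
    rw [hT]; unfold assocF
    simp only
    rw [show j + (i - (r:ℤ)) - i + r = j by ring,
      show n - (j + (i - (r:ℤ))) + s = n - i - j + r + s by ring,
      show j + (i - (r:ℤ)) = i + j - r by ring]
    ring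
  rw [h1, h2, h3, h4]
  refine sum_box_eq_finsum _ fun i j r s h => ?_
  obtain ⟨e1, e2, e3⟩ := assocF_bounds hA hB hC n x i j r s h
  refine ⟨Finset.mem_Icc.mpr ⟨by omega, e1⟩, Finset.mem_Icc.mpr ⟨by omega, e2⟩,
    Finset.mem_range.mpr (by omega), Finset.mem_range.mpr (by omega)⟩

lemma itd_pdMul_term {B C : PsiDO} {b c : ℤ} (hB : PBdd B b) (hC : PBdd C c)
    (hBs : PSm B) (hCs : PSm C) (s₃ : Finset ℤ) (K₅ : ℕ) (m : ℤ)
    (hcov : ∀ j, m - c ≤ j → j ≤ b → j ∈ s₃) (hK₅ : b + c - m < (K₅:ℤ)) (k : ℕ) (x : ℝ) :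
    iteratedDeriv k (pdMul B C m) x = ∑ j ∈ s₃, ∑ l ∈ Finset.range K₅, ∑ p ∈ Finset.range (k+1),
      pdChoose j l * ((k.choose p : ℝ) * iteratedDeriv p (B j) x
        * iteratedDeriv ((k-p)+l) (C (m - j + l)) x) := by
  have hfun : pdMul B C m = fun y => ∑ j ∈ s₃, ∑ l ∈ Finset.range K₅,
      pdChoose j l * B j y * iteratedDeriv l (C (m - j + l)) y :=
    funext fun y => pdMul_eq_sum hB hC m y s₃ hcov K₅ hK₅
  rw [hfun]
  rw [itd_sum s₃ (fun j => fun y => ∑ l ∈ Finset.range K₅,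
      pdChoose j l * B j y * iteratedDeriv l (C (m - j + l)) y) k
    (fun j _ => ContDiff.sum fun l _ => (contDiff_const.mul (hBs j)).mul (itd_smooth (hCs _) l)) x]
  refine Finset.sum_congr rfl fun j _ => ?_
  rw [itd_sum (Finset.range K₅) (fun l => fun y =>
      pdChoose j l * B j y * iteratedDeriv l (C (m - j + l)) y) k
    (fun l _ => (contDiff_const.mul (hBs j)).mul (itd_smooth (hCs _) l)) x]
  refine Finset.sum_congr rfl fun l _ => ?_
  have hshape : (fun y => pdChoose j l * B j y * iteratedDeriv l (C (m - j + l)) y)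
      = fun y => pdChoose j l * (B j y * iteratedDeriv l (C (m - j + l)) y) := by
    funext y; ring
  rw [hshape, itd_const_mul ((hBs j).mul (itd_smooth (hCs _) l)) _ k x,
    itd_mul (hBs j) (itd_smooth (hCs _) l) k x, Finset.mul_sum]
  refine Finset.sum_congr rfl fun p _ => ?_
  rw [itd_itd]

lemma assoc_rhs {A B C : PsiDO} {a b c : ℤ} (hA : PBdd A a) (hB : PBdd B b) (hC : PBdd C c)
    (hBs : PSm B) (hCs : PSm C) (n : ℤ) (x : ℝ) :
    pdMul A (pdMul B C) n x = ∑ᶠ i, ∑ᶠ j, ∑ᶠ r, ∑ᶠ s, assocF A B C n x i j r s := by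
  set K₁ : ℕ := (a+b+c-n).toNat + 1 with hK₁
  set K₅ : ℕ := (a+b+c-n+K₁).toNat + 1 with hK₅
  set S : ℕ := K₁ + K₅ with hS
  set s₄ : Finset ℤ := Finset.Icc (n - b - c) a with hs₄
  set s₃ : Finset ℤ := Finset.Icc (n - a - c) b with hs₃
  set H : ℤ → ℕ → ℤ → ℕ → ℕ → ℝ := fun i k j l p =>
    pdChoose i k * A i x * (pdChoose j l * ((k.choose p : ℝ) * iteratedDeriv p (B j) x
      * iteratedDeriv ((k-p)+l) (C ((n - i + k) - j + l)) x)) with hH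
  set G2 : ℤ → ℤ → ℕ → ℕ → ℕ → ℝ := fun i j p t l =>
    dch ((i:ℝ) - p) t * pdChoose j l * (pdChoose i p * A i x * iteratedDeriv p (B j) x
      * iteratedDeriv (t+l) (C (n - i - j + p + (t+l))) x) with hG2
  have h1 : pdMul A (pdMul B C) n x
      = ∑ i ∈ s₄, ∑ k ∈ Finset.range K₁, ∑ j ∈ s₃, ∑ l ∈ Finset.range K₅,
          ∑ p ∈ Finset.range (k+1), H i k j l p := by
    rw [pdMul_eq_sum hA (pdMul_bdd hB hC) n x s₄
      (fun i hi1 hi2 => Finset.mem_Icc.mpr ⟨by omega, hi2⟩) K₁ (by omega)]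
    refine Finset.sum_congr rfl fun i hi => Finset.sum_congr rfl fun k _ => ?_
    have hi' := Finset.mem_Icc.mp hi
    rw [itd_pdMul_term hB hC hBs hCs s₃ K₅ (n - i + k)
      (fun j hj1 hj2 => Finset.mem_Icc.mpr ⟨by omega, hj2⟩) (by omega) k x]
    simp only [Finset.mul_sum]
    rfl
  have h2 : ∑ i ∈ s₄, ∑ k ∈ Finset.range K₁, ∑ j ∈ s₃, ∑ l ∈ Finset.range K₅,
          ∑ p ∈ Finset.range (k+1), H i k j l p
      = ∑ i ∈ s₄, ∑ k ∈ Finset.range K₁, ∑ j ∈ s₃, ∑ l ∈ Finset.range K₅,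
          ∑ p ∈ Finset.range K₁, H i k j l p := by
    refine Finset.sum_congr rfl fun i _ => Finset.sum_congr rfl fun k hk =>
      Finset.sum_congr rfl fun j _ => Finset.sum_congr rfl fun l _ => ?_
    have hk' := Finset.mem_range.mp hk
    refine Finset.sum_subset (Finset.range_subset_range.mpr (by omega)) fun p _ hp => ?_
    have : k < p := by simpa using hp
    rw [hH]; simp [Nat.choose_eq_zero_of_lt this]
  have h3 : ∑ i ∈ s₄, ∑ k ∈ Finset.range K₁, ∑ j ∈ s₃, ∑ l ∈ Finset.range K₅,
          ∑ p ∈ Finset.range K₁, H i k j l p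
      = ∑ i ∈ s₄, ∑ j ∈ s₃, ∑ p ∈ Finset.range K₁, ∑ l ∈ Finset.range K₅,
          ∑ k ∈ Finset.range K₁, H i k j l p := by
    refine Finset.sum_congr rfl fun i _ => ?_
    rw [Finset.sum_comm]
    refine Finset.sum_congr rfl fun j _ => ?_
    rw [show (∑ k ∈ Finset.range K₁, ∑ l ∈ Finset.range K₅, ∑ p ∈ Finset.range K₁, H i k j l p)
        = ∑ k ∈ Finset.range K₁, ∑ p ∈ Finset.range K₁, ∑ l ∈ Finset.range K₅, H i k j l p from
      Finset.sum_congr rfl fun k _ => Finset.sum_comm]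
    rw [Finset.sum_comm]
    refine Finset.sum_congr rfl fun p _ => Finset.sum_comm
  have h4 : ∑ i ∈ s₄, ∑ j ∈ s₃, ∑ p ∈ Finset.range K₁, ∑ l ∈ Finset.range K₅,
          ∑ k ∈ Finset.range K₁, H i k j l p
      = ∑ i ∈ s₄, ∑ j ∈ s₃, ∑ p ∈ Finset.range K₁, ∑ l ∈ Finset.range K₅,
          ∑ t ∈ Finset.range S, G2 i j p t l := by
    refine Finset.sum_congr rfl fun i hi => Finset.sum_congr rfl fun j hj =>
      Finset.sum_congr rfl fun p hp => Finset.sum_congr rfl fun l _ => ?_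
    have hi' := Finset.mem_Icc.mp hi
    have hj' := Finset.mem_Icc.mp hj
    have hp' := Finset.mem_range.mp hp
    have hzero : ∑ k ∈ Finset.range p, H i k j l p = 0 :=
      Finset.sum_eq_zero fun k hk => by
        rw [hH]; simp [Nat.choose_eq_zero_of_lt (Finset.mem_range.mp hk)]
    rw [← Finset.sum_range_add_sum_Ico (fun k => H i k j l p) (le_of_lt hp'), hzero, zero_add,
      Finset.sum_Ico_eq_sum_range]
    have hleaf : ∀ t, H i (p+t) j l p = G2 i j p t l := by
      intro t
      rw [hH, hG2]
      simp only
      rw [Nat.add_sub_cancel_left,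
        show ((n - i + (↑(p+t):ℤ)) - j + ↑l) = n - i - j + ↑p + ((t:ℤ) + (l:ℤ)) by push_cast; ring]
      have hc := pdChoose_mul_choose i p t
      linear_combination (A i x * pdChoose j l * iteratedDeriv p (B j) x
        * iteratedDeriv (t+l) (C (n - i - j + ↑p + ((t:ℤ) + (l:ℤ)))) x) * hc
    rw [Finset.sum_congr rfl fun t _ => hleaf t]
    refine Finset.sum_subset (Finset.range_subset_range.mpr (by omega)) fun t _ ht => ?_
    have ht' : K₁ - p ≤ t := by simpa using ht
    rw [hG2]; simp only
    rw [itd_of_bdd hC (by omega)]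
    ring
  have h5 : ∑ i ∈ s₄, ∑ j ∈ s₃, ∑ p ∈ Finset.range K₁, ∑ l ∈ Finset.range K₅,
          ∑ t ∈ Finset.range S, G2 i j p t l
      = ∑ i ∈ s₄, ∑ j ∈ s₃, ∑ p ∈ Finset.range K₁, ∑ t ∈ Finset.range S,
          ∑ l ∈ Finset.range S, G2 i j p t l := by
    refine Finset.sum_congr rfl fun i hi => Finset.sum_congr rfl fun j hj =>
      Finset.sum_congr rfl fun p _ => ?_
    have hi' := Finset.mem_Icc.mp hi
    have hj' := Finset.mem_Icc.mp hj
    rw [Finset.sum_comm]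
    refine Finset.sum_congr rfl fun t _ => ?_
    refine Finset.sum_subset (Finset.range_subset_range.mpr (by omega)) fun l _ hl => ?_
    have hl' : K₅ ≤ l := by simpa using hl
    rw [hG2]; simp only
    rw [itd_of_bdd hC (by omega)]
    ring
  have h6 : ∑ i ∈ s₄, ∑ j ∈ s₃, ∑ p ∈ Finset.range K₁, ∑ t ∈ Finset.range S,
          ∑ l ∈ Finset.range S, G2 i j p t l
      = ∑ i ∈ s₄, ∑ j ∈ s₃, ∑ p ∈ Finset.range K₁, ∑ s' ∈ Finset.range (2*S),
          assocF A B C n x i j p s' := by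
    refine Finset.sum_congr rfl fun i hi => Finset.sum_congr rfl fun j hj =>
      Finset.sum_congr rfl fun p hp => ?_
    have hi' := Finset.mem_Icc.mp hi
    have hj' := Finset.mem_Icc.mp hj
    have hp' := Finset.mem_range.mp hp
    have hG2bd : ∀ t l : ℕ, G2 i j p t l ≠ 0 → n - i - j + (p:ℤ) + ((t:ℤ) + (l:ℤ)) ≤ c := by
      intro t l hG
      by_contra hcon; push_neg at hcon
      exact hG (by rw [hG2]; simp only; rw [itd_of_bdd hC hcon]; ring)
    rw [sum_diag (fun t l => G2 i j p t l) S fun t l hg => by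
      have := hG2bd t l hg
      constructor <;> omega]
    refine Finset.sum_congr rfl fun s' _ => ?_
    have hts : ∀ t ∈ Finset.range (s'+1), G2 i j p t (s'-t)
        = dch ((i:ℝ) - p) t * dch (j:ℝ) (s'-t)
          * (pdChoose i p * A i x * iteratedDeriv p (B j) x
             * iteratedDeriv s' (C (n - i - j + p + (s':ℕ))) x) := by
      intro t ht
      have : t + (s' - t) = s' := by have := Finset.mem_range.mp ht; omega
      rw [hG2]; simp only
      rw [this, show ((t:ℤ) + ((s'-t:ℕ):ℤ)) = (s':ℤ) by omega]
      rfl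
    rw [Finset.sum_congr rfl hts, ← Finset.sum_mul, dch_vandermonde ((i:ℝ) - p) (j:ℝ) s']
    unfold assocF
    rw [show ((i:ℝ) - ↑p + ↑j) = (((i + j - ↑p : ℤ)):ℝ) by push_cast; ring]
    rw [show pdChoose (i + j - ↑p) s' = dch (((i + j - ↑p : ℤ)):ℝ) s' from rfl]
    ring
  rw [h1, h2, h3, h4, h5, h6]
  refine sum_box_eq_finsum _ fun i j r s h => ?_
  obtain ⟨e1, e2, e3⟩ := assocF_bounds hA hB hC n x i j r s h
  refine ⟨Finset.mem_Icc.mpr ⟨by omega, e1⟩, Finset.mem_Icc.mpr ⟨by omega, e2⟩,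
    Finset.mem_range.mpr (by omega), Finset.mem_range.mpr (by omega)⟩

theorem pdMul_assoc {A B C : PsiDO} {a b c : ℤ} (hA : PBdd A a) (hB : PBdd B b) (hC : PBdd C c)
    (hBs : PSm B) (hCs : PSm C) (n : ℤ) (x : ℝ) :
    pdMul (pdMul A B) C n x = pdMul A (pdMul B C) n x := by
  rw [assoc_lhs hA hB hC n x, assoc_rhs hA hB hC hBs hCs n x]

lemma itd_const (c : ℝ) (k : ℕ) (hk : k ≠ 0) :
    iteratedDeriv k (fun _ : ℝ => c) = fun _ => 0 := by
  obtain ⟨m, rfl⟩ := Nat.exists_eq_succ_of_ne_zero hk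
  rw [iteratedDeriv_succ', deriv_const']
  exact funext fun x => itd_zero_fun m x

lemma pdMul_one_right' (A L : PsiDO) (n : ℤ) (x : ℝ) : pdMul A (pdPow L 0) n x = A n x := by
  unfold pdMul
  rw [finsum_eq_single _ n ?_]
  · rw [finsum_eq_single _ 0 ?_]
    · show pdChoose n 0 * A n x * iteratedDeriv 0 (pdPow L 0 (n - n + 0)) x = A n x
      rw [pdChoose_zero, iteratedDeriv_zero]
      show 1 * A n x * (if (n - n + (0:ℕ) : ℤ) = 0 then (1:ℝ) else 0) = A n x
      norm_num
    · intro k hk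
      show pdChoose n k * A n x * iteratedDeriv k (pdPow L 0 (n - n + k)) x = 0
      have h1 : (n - n + (k:ℤ)) ≠ 0 := by omega
      have : pdPow L 0 (n - n + k) = fun _ => (0:ℝ) := by
        show (fun _ => if (n - n + (k:ℤ)) = 0 then (1:ℝ) else 0) = _
        simp [h1, hk]
      rw [this]
      rw [show (fun _ : ℝ => (0:ℝ)) = (0 : ℝ → ℝ) from rfl, itd_zero_fun, mul_zero]
  · intro i hi
    apply finsum_eq_zero_of_forall_eq_zero
    intro k
    by_cases h1 : (n - i + (k:ℤ)) = 0
    · have hk : k ≠ 0 := by omega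
      have : pdPow L 0 (n - i + k) = fun _ => (1:ℝ) := by
        show (fun _ => if (n - i + (k:ℤ)) = 0 then (1:ℝ) else 0) = _
        simp [h1]
      rw [this, itd_const 1 k hk, mul_zero]
    · have : pdPow L 0 (n - i + k) = fun _ => (0:ℝ) := by
        show (fun _ => if (n - i + (k:ℤ)) = 0 then (1:ℝ) else 0) = _
        simp [h1]
      rw [this, show (fun _ : ℝ => (0:ℝ)) = (0 : ℝ → ℝ) from rfl, itd_zero_fun, mul_zero]

lemma pdMul_one_left' (A L : PsiDO) (n : ℤ) (x : ℝ) : pdMul (pdPow L 0) A n x = A n x := by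
  unfold pdMul
  rw [finsum_eq_single _ 0 ?_]
  · rw [finsum_eq_single _ 0 ?_]
    · show pdChoose 0 0 * (if (0:ℤ) = 0 then (1:ℝ) else 0) * iteratedDeriv 0 (A (n - 0 + 0)) x = A n x
      rw [pdChoose_zero, iteratedDeriv_zero]
      norm_num
    · intro k hk
      show pdChoose 0 k * (if (0:ℤ) = 0 then (1:ℝ) else 0) * iteratedDeriv k (A (n - 0 + k)) x = 0
      have : pdChoose 0 k = 0 := by
        rw [pdChoose_eq_dch]
        push_cast
        exact dch_nat_zero k hk
      rw [this, zero_mul, zero_mul]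
  · intro i hi
    apply finsum_eq_zero_of_forall_eq_zero
    intro k
    have : (if (i:ℤ) = 0 then (1:ℝ) else 0) = 0 := by simp [hi]
    show pdChoose i k * (if (i:ℤ) = 0 then (1:ℝ) else 0) * iteratedDeriv k (A (n - i + k)) x = 0
    rw [this, mul_zero, zero_mul]


section Main
variable {L : PsiDO}

lemma pow_bdd (hLb : PBdd L 1) : ∀ i : ℕ, PBdd (pdPow L i) i := by
  intro i
  induction i with
  | zero =>
    intro m hm
    show (fun _ => if m = 0 then (1:ℝ) else 0) = 0
    have : m ≠ 0 := by omega
    simp [this]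
    rfl
  | succ k ih =>
    intro m hm
    have := pdMul_bdd ih hLb (a := k) (b := 1)
    exact this m (by push_cast; omega)

lemma pow_smooth (hLb : PBdd L 1) (hLs : PSm L) : ∀ i : ℕ, PSm (pdPow L i) := by
  intro i
  induction i with
  | zero =>
    intro m
    show ContDiff ℝ (⊤:ℕ∞) (fun _ => if m = 0 then (1:ℝ) else 0)
    exact contDiff_const
  | succ k ih => exact pdMul_smooth (pow_bdd hLb k) hLb ih hLs

lemma pow_comm (hLb : PBdd L 1) (hLs : PSm L) :
    ∀ i : ℕ, ∀ n : ℤ, ∀ x : ℝ, pdMul L (pdPow L i) n x = pdMul (pdPow L i) L n x := by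
  intro i
  induction i with
  | zero =>
    intro n x
    rw [pdMul_one_right' L L n x, pdMul_one_left' L L n x]
  | succ k ih =>
    intro n x
    have hfe : pdMul L (pdPow L k) = pdMul (pdPow L k) L :=
      funext fun n => funext fun x => ih n x
    show pdMul L (pdMul (pdPow L k) L) n x = pdMul (pdMul (pdPow L k) L) L n x
    rw [← pdMul_assoc hLb (pow_bdd hLb k) hLb (pow_smooth hLb hLs k) hLs n x, hfe]

lemma pdPlus_bdd {P : PsiDO} {p : ℤ} (hP : PBdd P p) (hp : 0 ≤ p) : PBdd (pdPlus P) p := by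
  intro m hm
  show (if 0 ≤ m then P m else 0) = 0
  by_cases h : 0 ≤ m
  · rw [if_pos h]; exact hP m hm
  · rw [if_neg h]

lemma pdMinus_bdd (P : PsiDO) : PBdd (pdMinus P) (-1) := by
  intro m hm
  show (if m < 0 then P m else 0) = 0
  rw [if_neg (by omega)]

lemma pdMinus_bdd' {P : PsiDO} {p : ℤ} (hP : PBdd P p) (hp : 0 ≤ p) : PBdd (pdMinus P) p :=
  fun m hm => pdMinus_bdd P m (by omega)

lemma itd_split (P : PsiDO) (m : ℤ) (k : ℕ) (x : ℝ) :
    iteratedDeriv k (P m) x = iteratedDeriv k (pdPlus P m) x + iteratedDeriv k (pdMinus P m) x := by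
  by_cases h : 0 ≤ m
  · have h1 : pdPlus P m = P m := if_pos h
    have h2 : pdMinus P m = 0 := if_neg (by omega)
    rw [h1, h2, itd_zero_fun, add_zero]
  · have h1 : pdPlus P m = 0 := if_neg h
    have h2 : pdMinus P m = P m := if_pos (by omega)
    rw [h1, h2, itd_zero_fun, zero_add]

lemma val_split (P : PsiDO) (m : ℤ) (x : ℝ) :
    P m x = pdPlus P m x + pdMinus P m x := by
  unfold pdPlus pdMinus
  by_cases h : 0 ≤ m
  · rw [if_pos h, if_neg (by omega), Pi.zero_apply, add_zero]
  · rw [if_neg h, if_pos (by omega), Pi.zero_apply, zero_add]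

lemma split_right {A P : PsiDO} {p : ℤ} (hA : PBdd A 1) (hP : PBdd P p) (hp : 0 ≤ p)
    (n : ℤ) (x : ℝ) :
    pdMul A P n x = pdMul A (pdPlus P) n x + pdMul A (pdMinus P) n x := by
  rw [pdMul_eq_sum hA hP n x (Finset.Icc (n - p) 1)
      (fun i h1 h2 => Finset.mem_Icc.mpr ⟨h1, h2⟩) ((1 + p - n).toNat + 1) (by omega),
    pdMul_eq_sum hA (pdPlus_bdd hP hp) n x (Finset.Icc (n - p) 1)
      (fun i h1 h2 => Finset.mem_Icc.mpr ⟨h1, h2⟩) ((1 + p - n).toNat + 1) (by omega),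
    pdMul_eq_sum hA (pdMinus_bdd' hP hp) n x (Finset.Icc (n - p) 1)
      (fun i h1 h2 => Finset.mem_Icc.mpr ⟨h1, h2⟩) ((1 + p - n).toNat + 1) (by omega),
    ← Finset.sum_add_distrib]
  refine Finset.sum_congr rfl fun i _ => ?_
  rw [← Finset.sum_add_distrib]
  refine Finset.sum_congr rfl fun k _ => ?_
  rw [itd_split P (n - i + k) k x]
  ring

lemma split_left {A P : PsiDO} {p : ℤ} (hA : PBdd A 1) (hP : PBdd P p) (hp : 0 ≤ p)
    (n : ℤ) (x : ℝ) :
    pdMul P A n x = pdMul (pdPlus P) A n x + pdMul (pdMinus P) A n x := by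
  rw [pdMul_eq_sum hP hA n x (Finset.Icc (n - 1) p)
      (fun i h1 h2 => Finset.mem_Icc.mpr ⟨h1, h2⟩) ((p + 1 - n).toNat + 1) (by omega),
    pdMul_eq_sum (pdPlus_bdd hP hp) hA n x (Finset.Icc (n - 1) p)
      (fun i h1 h2 => Finset.mem_Icc.mpr ⟨h1, h2⟩) ((p + 1 - n).toNat + 1) (by omega),
    pdMul_eq_sum (pdMinus_bdd' hP hp) hA n x (Finset.Icc (n - 1) p)
      (fun i h1 h2 => Finset.mem_Icc.mpr ⟨h1, h2⟩) ((p + 1 - n).toNat + 1) (by omega),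
    ← Finset.sum_add_distrib]
  refine Finset.sum_congr rfl fun i _ => ?_
  rw [← Finset.sum_add_distrib]
  refine Finset.sum_congr rfl fun k _ => ?_
  rw [val_split P i x]
  ring

lemma minus_mul_right (hLb : PBdd L 1) (hmonic : L 1 = fun _ => 1) {P : PsiDO}
    (n : ℤ) (hn : 0 ≤ n) (x : ℝ) :
    pdMul L (pdMinus P) n x = pdMinus P (n - 1) x := by
  rw [pdMul_eq_sum hLb (pdMinus_bdd P) n x (Finset.Icc (n + 1) 1)
      (fun i h1 h2 => Finset.mem_Icc.mpr ⟨by omega, h2⟩) 1 (by omega)]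
  by_cases h : n = 0
  · subst h
    rw [show Finset.Icc (0 + 1 : ℤ) 1 = {1} by rw [zero_add, Finset.Icc_self]]
    rw [Finset.sum_singleton, Finset.range_one, Finset.sum_singleton]
    rw [pdChoose_zero, hmonic, iteratedDeriv_zero]
    show 1 * 1 * pdMinus P (0 - 1 + (0:ℕ)) x = pdMinus P (0 - 1) x
    norm_num
  · have h1 : Finset.Icc (n + 1 : ℤ) 1 = ∅ := Finset.Icc_eq_empty (by omega)
    rw [h1, Finset.sum_empty]
    have : pdMinus P (n - 1) = 0 := pdMinus_bdd P (n-1) (by omega)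
    rw [this, Pi.zero_apply]

lemma minus_mul_left (hhigh : ∀ m : ℤ, 2 ≤ m → L m = 0) (hmonic : L 1 = fun _ => 1) {P : PsiDO}
    (n : ℤ) (hn : 0 ≤ n) (x : ℝ) :
    pdMul (pdMinus P) L n x = pdMinus P (n - 1) x := by
  have hLb : PBdd L 1 := fun m hm => hhigh m (by omega)
  rw [pdMul_eq_sum (pdMinus_bdd P) hLb n x (Finset.Icc (n - 1) (-1))
      (fun i h1 h2 => Finset.mem_Icc.mpr ⟨h1, h2⟩) 1 (by omega)]
  by_cases h : n = 0
  · subst h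
    rw [show Finset.Icc (0 - 1 : ℤ) (-1) = {-1} by norm_num [Finset.Icc_self]]
    rw [Finset.sum_singleton, Finset.range_one, Finset.sum_singleton]
    rw [pdChoose_zero, iteratedDeriv_zero]
    rw [show (0 - (-1) + ((0:ℕ):ℤ)) = 1 by norm_num, hmonic]
    show 1 * pdMinus P (-1) x * 1 = pdMinus P (0 - 1) x
    norm_num
  · have h1 : Finset.Icc (n - 1 : ℤ) (-1) = ∅ := Finset.Icc_eq_empty (by omega)
    rw [h1, Finset.sum_empty]
    have : pdMinus P (n - 1) = 0 := pdMinus_bdd P (n-1) (by omega)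
    rw [this, Pi.zero_apply]

end Main


/-- For a monic pseudo-differential operator `𝓛 = ∂ + w₁∂⁻¹ + ⋯` of order one (with
smooth coefficients) and any `i`, the commutator `[𝓛, (𝓛^i)₊]` equals `-[𝓛, (𝓛^i)₋]`
and has order at most `-1`: all its coefficients of nonnegative powers of `∂` vanish.
Hence the KP flows preserve the form `𝓛 = ∂ + w₁∂⁻¹ + w₂∂⁻² + ⋯`. -/
theorem comm_order_neg (L : PsiDO)
    (hsmooth : ∀ n, ContDiff ℝ (⊤ : ℕ∞) (L n))
    (hmonic : L 1 = fun _ => 1)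
    (hzero : L 0 = 0)
    (hhigh : ∀ n : ℤ, 2 ≤ n → L n = 0) (i : ℕ) :
    (∀ n : ℤ, ∀ x : ℝ,
      pdComm L (pdPlus (pdPow L i)) n x = -pdComm L (pdMinus (pdPow L i)) n x) ∧
    (∀ n : ℤ, 0 ≤ n → ∀ x : ℝ, pdComm L (pdPlus (pdPow L i)) n x = 0) := by
  have hLb : PBdd L 1 := fun m hm => hhigh m (by omega)
  have hLs : PSm L := fun m => (hsmooth m).of_le (by simp)
  set P : PsiDO := pdPow L i with hP
  have hPb : PBdd P i := pow_bdd hLb i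
  have hp : (0:ℤ) ≤ (i:ℤ) := by positivity
  have parta : ∀ n : ℤ, ∀ x : ℝ,
      pdComm L (pdPlus P) n x = -pdComm L (pdMinus P) n x := by
    intro n x
    have hsr := split_right hLb hPb hp n x
    have hsl := split_left hLb hPb hp n x
    have hc := pow_comm hLb hLs i n x
    unfold pdComm
    rw [← hP] at *
    linarith
  refine ⟨parta, fun n hn x => ?_⟩
  rw [parta n x]
  unfold pdComm
  rw [minus_mul_right hLb hmonic n hn x, minus_mul_left hhigh hmonic n hn x]
  ring
end

section
/- For N = 1 and S = (-2, 1, 2, 3, …), the 1-Schur function is f_S¹ = h₂/h₀, where h_k := h^{1,1}_k: i.e., the determinant of the top-left m×m block of M_S divided by h₀^m equals h₂/h₀ for all m ≥ 1 (assuming h₀ ≠ 0). -/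
/-!
Every column of `M_S` after the first has index `s_i = i > 0`, so the first row of the
`m × m` block vanishes except for its corner entry `h_{0 - (-2)} = h₂`. Expanding along that
row leaves the block with rows and columns `1, …, m-1`, which is the lower triangular Toeplitz
matrix `(h_{j-i})` with diagonal `h₀`; hence the determinant is `h₂ h₀^(m-1)`.
-/

namespace Matrix

variable {R : Type*} [CommRing R]

theorem det_succ_eq_mul_det_submatrix_of_row_zero {n : ℕ}
    (A : Matrix (Fin (n + 1)) (Fin (n + 1)) R) (hA : ∀ i ≠ 0, A 0 i = 0) :
    A.det = A 0 0 * (A.submatrix Fin.succ Fin.succ).det := by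
  rw [det_succ_row_zero, Finset.sum_eq_single 0 (fun i _ hi => by rw [hA i hi]; ring)
    (by simp)]
  simp

theorem det_toeplitz_of_lowerTriangular (a : ℤ → R) (ha : ∀ k < 0, a k = 0) (n : ℕ) :
    (of fun j i : Fin n => a ((j : ℤ) - i)).det = a 0 ^ n := by
  have hlower : (of fun j i : Fin n => a ((j : ℤ) - i)).IsLowerTriangular := by
    intro j i hij
    exact ha _ (by simp only [OrderDual.toDual_lt_toDual] at hij; omega)
  simp [det_of_isLowerTriangular _ hlower]

end Matrix

/-- For `N = 1` and `S = (-2, 1, 2, 3, …)`, the 1-Schur function equals `h₂/h₀`: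
the determinant of the top-left `m×m` block of `M_S` (whose `(j,i)` entry is
`h_{j - s_i}`, with `h_k = 0` for `k < 0`) divided by `h₀^m` equals `h₂/h₀` for
every `m ≥ 1` (assuming `h₀ ≠ 0`). -/
theorem oneSchur_example (h : ℕ → ℂ) (hh0 : h 0 ≠ 0)
    (hh : ℤ → ℂ) (hhdef : ∀ k : ℤ, hh k = if 0 ≤ k then h k.toNat else 0)
    (s : ℕ → ℤ) (hs0 : s 0 = -2) (hs : ∀ i : ℕ, 1 ≤ i → s i = i)
    (m : ℕ) (hm : 1 ≤ m)
    (A : Matrix (Fin m) (Fin m) ℂ)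
    (hA : ∀ j i : Fin m, A j i = hh ((j : ℤ) - s i)) :
    Matrix.det A / (h 0) ^ m = h 2 / h 0 := by
  obtain ⟨n, rfl⟩ : ∃ n, m = n + 1 := ⟨m - 1, by omega⟩
  have hh_neg : ∀ k < 0, hh k = 0 := fun k hk => by rw [hhdef, if_neg (by omega)]
  have hs_succ : ∀ i : Fin n, s (i.succ : ℕ) = (i : ℤ) + 1 := fun i => by
    rw [hs _ (by simp), Fin.val_succ, Nat.cast_succ]
  have hrow : ∀ i ≠ 0, A 0 i = 0 := fun i hi => by
    have hi' : 1 ≤ (i : ℕ) := Nat.one_le_iff_ne_zero.2 (Fin.val_ne_zero_iff.2 hi)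
    rw [hA, hs _ hi']
    exact hh_neg _ (by simp only [Fin.val_zero, Nat.cast_zero]; omega)
  have hcorner : A 0 0 = h 2 := by simp [hA, hs0, hhdef]
  have hminor : A.submatrix Fin.succ Fin.succ = Matrix.of fun j i : Fin n => hh ((j : ℤ) - i) := by
    ext j i
    rw [Matrix.submatrix_apply, hA, hs_succ, Matrix.of_apply, Fin.val_succ]
    congr 1
    push_cast
    ring
  rw [Matrix.det_succ_eq_mul_det_submatrix_of_row_zero A hrow, hcorner, hminor,
    Matrix.det_toeplitz_of_lowerTriangular hh hh_neg,
    hhdef 0, if_pos le_rfl, Int.toNat_zero]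
  field_simp
  ring
end
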